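/- Let α ∈ ℝ and consider the linear operators on C^∞(ℝ², ℝ) given by L₁f = x f_y − y f_x + α f, L₂f = (1 + x² − y²) f_x + 2xy f_y + 2αy f, and L₃f = 2xy f_x + (1 − x² + y²) f_y − 2αx f. If there exists a nonzero finite-dimensional subspace V of C^∞(ℝ², ℝ) with L_i(V) ⊆ V for i = 1, 2, 3, then α = 0. -/

import Mathlib

/-- partial derivative in `x` of a real-valued function on `ℝ²`. -/
noncomputable def pdx (f : ℝ × ℝ → ℝ) : ℝ × ℝ → ℝ := fun p => fderiv ℝ f p (1, 0)

/-- partial derivative in `y` of a real-valued function on `ℝ²`. -/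
noncomputable def pdy (f : ℝ × ℝ → ℝ) : ℝ × ℝ → ℝ := fun p => fderiv ℝ f p (0, 1)

/-!
The operators are `Lᵢ = Xᵢ + cᵢ` with first-order parts the vector fields `so3Field₁`,
`so3Field₂`, `so3Field₃`, and `[L₂, L₃] = -4 L₁`. Restricted to a finite-dimensional invariant
space `V`, `L₁` is therefore a multiple of a commutator and has trace zero. On the other hand
`L₁ = X₁ + α`, where `X₁` generates the rotations about the origin. Integrating `f g` over the
rotation orbits of finitely many points that determine the elements of `V` gives an inner product
on `V` for which `X₁` is skew-adjoint, so `tr X₁ = 0`. Hence `0 = tr L₁ = α dim V`.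
-/

open Real VectorField

section FirstOrderOp

variable {𝕜 E : Type*} [RCLike 𝕜] [NormedAddCommGroup E] [NormedSpace 𝕜 E]

noncomputable def firstOrderOp (v : E → E) (c f : E → 𝕜) : E → 𝕜 :=
  fun x => fderiv 𝕜 f x (v x) + c x * f x

theorem firstOrderOp_add {v : E → E} {c f g : E → 𝕜} (hf : Differentiable 𝕜 f)
    (hg : Differentiable 𝕜 g) :
    firstOrderOp v c (f + g) = firstOrderOp v c f + firstOrderOp v c g := by
  funext x
  simp only [firstOrderOp, Pi.add_apply, fderiv_add (hf x) (hg x), add_apply]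
  ring

theorem firstOrderOp_smul (v : E → E) (c f : E → 𝕜) (a : 𝕜) :
    firstOrderOp v c (a • f) = a • firstOrderOp v c f := by
  funext x
  simp only [firstOrderOp, Pi.smul_apply, fderiv_const_smul_field, smul_apply, smul_eq_mul]
  ring

theorem firstOrderOp_const (v : E → E) (a : 𝕜) (f : E → 𝕜) :
    firstOrderOp v (fun _ => a) f = firstOrderOp v 0 f + a • f := by
  funext x
  simp [firstOrderOp]

theorem firstOrderOp_sub_firstOrderOp {v w : E → E} {c d f : E → 𝕜}
    (hf : ContDiff 𝕜 2 f) (hv : Differentiable 𝕜 v) (hw : Differentiable 𝕜 w)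
    (hc : Differentiable 𝕜 c) (hd : Differentiable 𝕜 d) :
    firstOrderOp v c (firstOrderOp w d f) - firstOrderOp w d (firstOrderOp v c f) =
      firstOrderOp (lieBracket 𝕜 v w) (fun x => fderiv 𝕜 d x (v x) - fderiv 𝕜 c x (w x)) f := by
  have hdf : Differentiable 𝕜 f := hf.differentiable (by norm_num)
  have hdf' : ∀ u : E → E, Differentiable 𝕜 u → Differentiable 𝕜 (fun x => fderiv 𝕜 f x (u x)) :=
    fun u hu => ((hf.fderiv_right (m := 1) (by norm_num)).differentiable (by norm_num)).clm_apply hu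
  funext x
  have hbracket := fderiv_apply_lieBracket hf.contDiffAt (by simp) (hw x) (hv x)
  simp only [Pi.sub_apply]
  unfold firstOrderOp
  rw [fderiv_fun_add (hdf' w hw x) (by fun_prop), fderiv_fun_add (hdf' v hv x) (by fun_prop),
    fderiv_fun_mul (hd x) (hdf x), fderiv_fun_mul (hc x) (hdf x)]
  simp only [add_apply, smul_apply, smul_eq_mul, hbracket]
  ring

noncomputable def firstOrderOpEnd (V : Submodule 𝕜 (E → 𝕜)) (hV : ∀ f ∈ V, Differentiable 𝕜 f)
    (v : E → E) (c : E → 𝕜) (hVinv : ∀ f ∈ V, firstOrderOp v c f ∈ V) : Module.End 𝕜 V :=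
  LinearMap.codRestrict V
    { toFun := fun f => firstOrderOp v c f
      map_add' := fun f g => firstOrderOp_add (hV f f.2) (hV g g.2)
      map_smul' := fun a f => firstOrderOp_smul v c f a }
    fun f => hVinv f f.2

@[simp]
theorem coe_firstOrderOpEnd_apply (V : Submodule 𝕜 (E → 𝕜)) (hV : ∀ f ∈ V, Differentiable 𝕜 f)
    (v : E → E) (c : E → 𝕜) (hVinv : ∀ f ∈ V, firstOrderOp v c f ∈ V) (f : V) :
    ((firstOrderOpEnd V hV v c hVinv f : V) : E → 𝕜) = firstOrderOp v c f :=
  rfl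

end FirstOrderOp

theorem fderiv_apply_mk (f : ℝ × ℝ → ℝ) (p : ℝ × ℝ) (a b : ℝ) :
    fderiv ℝ f p (a, b) = a * pdx f p + b * pdy f p := by
  have hab : ((a, b) : ℝ × ℝ) = a • ((1 : ℝ), (0 : ℝ)) + b • ((0 : ℝ), (1 : ℝ)) := by simp
  rw [hab, map_add, map_smul, map_smul, smul_eq_mul, smul_eq_mul, pdx, pdy]

/- In complex notation `z = x + iy` these are `iz`, `1 + z²` and `i(1 - z²)`: the infinitesimal
rotations of the Riemann sphere. -/
def so3Field₁ (p : ℝ × ℝ) : ℝ × ℝ := (-p.2, p.1)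

def so3Field₂ (p : ℝ × ℝ) : ℝ × ℝ := (1 + p.1 ^ 2 - p.2 ^ 2, 2 * p.1 * p.2)

def so3Field₃ (p : ℝ × ℝ) : ℝ × ℝ := (2 * p.1 * p.2, 1 - p.1 ^ 2 + p.2 ^ 2)

theorem firstOrderOp_so3Field₁ (α : ℝ) (f : ℝ × ℝ → ℝ) :
    firstOrderOp so3Field₁ (fun _ => α) f =
      fun p => p.1 * pdy f p - p.2 * pdx f p + α * f p := by
  funext p
  simp only [firstOrderOp, so3Field₁, fderiv_apply_mk]
  ring

theorem firstOrderOp_so3Field₂ (α : ℝ) (f : ℝ × ℝ → ℝ) :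
    firstOrderOp so3Field₂ (fun p => 2 * α * p.2) f =
      fun p => (1 + p.1 ^ 2 - p.2 ^ 2) * pdx f p + 2 * p.1 * p.2 * pdy f p
        + 2 * α * p.2 * f p := by
  funext p
  simp only [firstOrderOp, so3Field₂, fderiv_apply_mk]

theorem firstOrderOp_so3Field₃ (α : ℝ) (f : ℝ × ℝ → ℝ) :
    firstOrderOp so3Field₃ (fun p => -(2 * α * p.1)) f =
      fun p => 2 * p.1 * p.2 * pdx f p + (1 - p.1 ^ 2 + p.2 ^ 2) * pdy f p
        - 2 * α * p.1 * f p := by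
  funext p
  simp only [firstOrderOp, so3Field₃, fderiv_apply_mk]
  ring

@[fun_prop] theorem continuous_so3Field₁ : Continuous so3Field₁ := by
  unfold so3Field₁; fun_prop

theorem lieBracket_so3Field₂_so3Field₃ :
    lieBracket ℝ so3Field₂ so3Field₃ = (-4 : ℝ) • so3Field₁ := by
  funext p
  unfold so3Field₂ so3Field₃
  ext <;> simp (disch := fun_prop) [lieBracket, so3Field₁, DifferentiableAt.fderiv_prodMk,
    fderiv_fun_mul, fderiv_fun_pow, fderiv_fun_add, fderiv_fun_sub, fderiv_fst, fderiv_snd] <;> ring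

theorem firstOrderOp_so3Field₂_sub_so3Field₃ (α : ℝ) {f : ℝ × ℝ → ℝ}
    (hf : ContDiff ℝ 2 f) :
    firstOrderOp so3Field₂ (fun p => 2 * α * p.2)
        (firstOrderOp so3Field₃ (fun p => -(2 * α * p.1)) f) -
      firstOrderOp so3Field₃ (fun p => -(2 * α * p.1))
        (firstOrderOp so3Field₂ (fun p => 2 * α * p.2) f) =
      (-4 : ℝ) • firstOrderOp so3Field₁ (fun _ => α) f := by
  rw [firstOrderOp_sub_firstOrderOp hf (by unfold so3Field₂; fun_prop)
    (by unfold so3Field₃; fun_prop) (by fun_prop) (by fun_prop),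
    lieBracket_so3Field₂_so3Field₃]
  funext p
  simp only [firstOrderOp, Pi.smul_apply, map_smul, smul_eq_mul]
  simp (disch := fun_prop) [so3Field₂, so3Field₃, fderiv_fun_mul, fderiv_fst, fderiv_snd]
  ring

theorem LinearMap.IsSkewAdjoint.trace_eq_zero {K V : Type*} [Field K] [CharZero K]
    [AddCommGroup V] [Module K V] [FiniteDimensional K V]
    {B : LinearMap.BilinForm K V} (hB : B.Nondegenerate) {D : Module.End K V}
    (hD : B.IsSkewAdjoint D) : LinearMap.trace K V D = 0 := by
  -- `B` identifies `D` with minus its transpose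
  have hconj : (B.toDual hB).conj D = -(Module.Dual.transpose (R := K) D) := by
    ext φ y
    obtain ⟨x, rfl⟩ := (B.toDual hB).surjective φ
    simp [LinearEquiv.conj_apply, LinearMap.BilinForm.toDual_def, hD x y,
      Module.Dual.transpose_apply]
  have hneg : LinearMap.trace K _ (-(Module.Dual.transpose (R := K) D))
      = -LinearMap.trace K V D := by
    rw [← LinearMap.trace_transpose' D]
    exact map_neg (LinearMap.trace K (Module.Dual K V)) _
  have h := LinearMap.trace_conj' D (B.toDual hB)
  rw [hconj] at h
  linear_combination (hneg - h) / 2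

theorem Submodule.exists_finset_eq_zero_of_forall_apply_eq_zero {X R : Type*} [Ring R]
    (V : Submodule R (X → R)) [IsArtinian R V] :
    ∃ S : Finset X, ∀ f ∈ V, (∀ x ∈ S, f x = 0) → f = 0 := by
  classical
  -- a minimal finite intersection of evaluation kernels lies in every evaluation kernel
  let K : Finset X → Submodule R V := fun S =>
    ⨅ x ∈ S, LinearMap.ker (LinearMap.proj x ∘ₗ V.subtype)
  obtain ⟨_, ⟨S, rfl⟩, hmin⟩ := wellFounded_lt.has_min (Set.range K) ⟨_, ⟨∅, rfl⟩⟩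
  refine ⟨S, fun f hf hS => ?_⟩
  have hmem : (⟨f, hf⟩ : V) ∈ K S := by simpa [K] using hS
  funext x
  have hle : K (insert x S) ≤ K S := by
    simp only [K, Finset.iInf_insert]; exact inf_le_right
  have heq : K (insert x S) = K S := (hle.lt_or_eq).resolve_left (hmin _ ⟨_, rfl⟩)
  rw [← heq] at hmem
  simpa using
    (Submodule.mem_iInf _).1 ((Submodule.mem_iInf _).1 hmem x) (Finset.mem_insert_self x S)

noncomputable def rotate (θ : ℝ) (p : ℝ × ℝ) : ℝ × ℝ :=
  (p.1 * cos θ - p.2 * sin θ, p.1 * sin θ + p.2 * cos θ)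

@[simp] theorem rotate_zero (p : ℝ × ℝ) : rotate 0 p = p := by simp [rotate]

@[simp] theorem rotate_two_pi (p : ℝ × ℝ) : rotate (2 * π) p = p := by simp [rotate]

@[fun_prop] theorem continuous_rotate (p : ℝ × ℝ) : Continuous fun θ => rotate θ p := by
  unfold rotate; fun_prop

theorem hasDerivAt_rotate (θ : ℝ) (p : ℝ × ℝ) :
    HasDerivAt (fun t => rotate t p) (so3Field₁ (rotate θ p)) θ := by
  refine ((((hasDerivAt_cos θ).const_mul p.1).sub ((hasDerivAt_sin θ).const_mul p.2)).prodMk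
    (((hasDerivAt_sin θ).const_mul p.1).add ((hasDerivAt_cos θ).const_mul p.2))).congr_deriv ?_
  simp only [so3Field₁, rotate]
  ext <;> ring

theorem hasDerivAt_comp_rotate {f : ℝ × ℝ → ℝ} (hf : Differentiable ℝ f) (θ : ℝ) (p : ℝ × ℝ) :
    HasDerivAt (fun t => f (rotate t p))
      (fderiv ℝ f (rotate θ p) (so3Field₁ (rotate θ p))) θ :=
  (hf _).hasFDerivAt.comp_hasDerivAt θ (hasDerivAt_rotate θ p)

noncomputable def orbitPairing (p : ℝ × ℝ) (f g : ℝ × ℝ → ℝ) : ℝ :=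
  ∫ θ in 0..2 * π, f (rotate θ p) * g (rotate θ p)

section OrbitPairing

variable {p : ℝ × ℝ} {f f' g : ℝ × ℝ → ℝ}

theorem orbitPairing_comm : orbitPairing p f g = orbitPairing p g f := by
  simp only [orbitPairing, mul_comm]

theorem orbitPairing_add_left (hf : Continuous f) (hf' : Continuous f') (hg : Continuous g) :
    orbitPairing p (f + f') g = orbitPairing p f g + orbitPairing p f' g := by
  simp only [orbitPairing, Pi.add_apply, add_mul]
  exact intervalIntegral.integral_add (by apply Continuous.intervalIntegrable; fun_prop)
    (by apply Continuous.intervalIntegrable; fun_prop)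

theorem orbitPairing_smul_left (a : ℝ) : orbitPairing p (a • f) g = a * orbitPairing p f g := by
  simp only [orbitPairing, Pi.smul_apply, smul_eq_mul, mul_assoc,
    intervalIntegral.integral_const_mul]

theorem orbitPairing_self_nonneg : 0 ≤ orbitPairing p f f :=
  intervalIntegral.integral_nonneg (by positivity) fun _ _ => mul_self_nonneg _

theorem orbitPairing_self_pos (hf : Continuous f) (hp : f p ≠ 0) : 0 < orbitPairing p f f := by
  have := intervalIntegral.integral_lt_integral_of_continuousOn_of_le_of_exists_lt
    (f := fun _ => 0) (a := 0) (b := 2 * π) (by positivity) continuousOn_const (by fun_prop)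
    (fun θ _ => mul_self_nonneg (f (rotate θ p)))
    ⟨0, ⟨le_rfl, by positivity⟩, by simpa using mul_self_pos.2 hp⟩
  simpa [orbitPairing] using this

theorem orbitPairing_fderiv_so3Field₁_add (hf : ContDiff ℝ 1 f) (hg : ContDiff ℝ 1 g) :
    orbitPairing p (fun q => fderiv ℝ f q (so3Field₁ q)) g +
      orbitPairing p f (fun q => fderiv ℝ g q (so3Field₁ q)) = 0 := by
  have hdf := hf.continuous_fderiv one_ne_zero
  have hdg := hg.continuous_fderiv one_ne_zero
  have hcf := hf.continuous
  have hcg := hg.continuous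
  rw [orbitPairing, orbitPairing, ← intervalIntegral.integral_add
    (by apply Continuous.intervalIntegrable; fun_prop)
    (by apply Continuous.intervalIntegrable; fun_prop),
    intervalIntegral.integral_deriv_mul_eq_sub
      (fun θ _ => hasDerivAt_comp_rotate (hf.differentiable one_ne_zero) θ p)
      (fun θ _ => hasDerivAt_comp_rotate (hg.differentiable one_ne_zero) θ p)
      (by apply Continuous.intervalIntegrable; fun_prop)
      (by apply Continuous.intervalIntegrable; fun_prop)]
  simp

end OrbitPairing

noncomputable def orbitForm (V : Submodule ℝ (ℝ × ℝ → ℝ)) (hV : ∀ f ∈ V, Continuous f)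
    (S : Finset (ℝ × ℝ)) : LinearMap.BilinForm ℝ V :=
  LinearMap.mk₂ ℝ (fun f g => ∑ p ∈ S, orbitPairing p f g)
    (fun f f' g => by
      simp only [Submodule.coe_add, orbitPairing_add_left (hV f f.2) (hV f' f'.2) (hV g g.2),
        Finset.sum_add_distrib])
    (fun a f g => by
      simp only [Submodule.coe_smul, orbitPairing_smul_left, smul_eq_mul, Finset.mul_sum])
    (fun f g g' => by
      simp only [orbitPairing_comm (f := (f : ℝ × ℝ → ℝ)), Submodule.coe_add,
        orbitPairing_add_left (hV g g.2) (hV g' g'.2) (hV f f.2), Finset.sum_add_distrib])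
    (fun a f g => by
      simp only [orbitPairing_comm (f := (f : ℝ × ℝ → ℝ)), Submodule.coe_smul,
        orbitPairing_smul_left, smul_eq_mul, Finset.mul_sum])

theorem trace_eq_zero_of_coe_apply_eq_fderiv_so3Field₁ {V : Submodule ℝ (ℝ × ℝ → ℝ)}
    [FiniteDimensional ℝ V] (hV : ∀ f ∈ V, ContDiff ℝ 1 f) {D : Module.End ℝ V}
    (hD : ∀ f : V, ((D f : V) : ℝ × ℝ → ℝ) = fun q => fderiv ℝ f q (so3Field₁ q)) :
    LinearMap.trace ℝ V D = 0 := by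
  obtain ⟨S, hS⟩ := V.exists_finset_eq_zero_of_forall_apply_eq_zero
  let B := orbitForm V (fun f hf => (hV f hf).continuous) S
  have hB : ∀ f g : V, B f g = ∑ p ∈ S, orbitPairing p f g := fun _ _ => rfl
  have hpos : ∀ f : V, B f f = 0 → f = 0 := by
    intro f hf
    rw [hB, Finset.sum_eq_zero_iff_of_nonneg fun _ _ => orbitPairing_self_nonneg] at hf
    refine Subtype.ext (hS f f.2 fun p hp => ?_)
    by_contra hfp
    exact (orbitPairing_self_pos (hV f f.2).continuous hfp).ne' (hf p hp)
  refine LinearMap.IsSkewAdjoint.trace_eq_zero (B := B)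
    ⟨fun f hf => hpos f (hf f), fun f hf => hpos f (hf f)⟩ fun f g => ?_
  rw [Pi.neg_apply, map_neg, hB, hB, hD, hD, eq_neg_iff_add_eq_zero, ← Finset.sum_add_distrib]
  exact Finset.sum_eq_zero fun p _ => orbitPairing_fderiv_so3Field₁_add (hV f f.2) (hV g g.2)

/-- If the operators `f ↦ x f_y - y f_x + α f`,
`f ↦ (1 + x² - y²) f_x + 2xy f_y + 2αy f`,
`f ↦ 2xy f_x + (1 - x² + y²) f_y - 2αx f` admit a nonzero finite-dimensional
invariant subspace of smooth real functions, then `α = 0`. -/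
theorem alpha_zero_so3_case
    (α : ℝ) (V : Submodule ℝ (ℝ × ℝ → ℝ))
    (hsmooth : ∀ f ∈ V, ContDiff ℝ (⊤ : ℕ∞) f)
    (hne : V ≠ ⊥) (hfin : FiniteDimensional ℝ V)
    (hL₁ : ∀ f ∈ V, (fun p => p.1 * pdy f p - p.2 * pdx f p + α * f p) ∈ V)
    (hL₂ : ∀ f ∈ V,
      (fun p => (1 + p.1 ^ 2 - p.2 ^ 2) * pdx f p + 2 * p.1 * p.2 * pdy f p
        + 2 * α * p.2 * f p) ∈ V)
    (hL₃ : ∀ f ∈ V,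
      (fun p => 2 * p.1 * p.2 * pdx f p + (1 - p.1 ^ 2 + p.2 ^ 2) * pdy f p
        - 2 * α * p.1 * f p) ∈ V) :
    α = 0 := by
  have hC2 : ∀ f ∈ V, ContDiff ℝ 2 f :=
    fun f hf => (hsmooth f hf).of_le (WithTop.coe_le_coe.2 le_top)
  have hdiff : ∀ f ∈ V, Differentiable ℝ f := fun f hf => (hC2 f hf).differentiable two_ne_zero
  have h₁ : ∀ f ∈ V, firstOrderOp so3Field₁ (fun _ => α) f ∈ V :=
    fun f hf => (firstOrderOp_so3Field₁ α f).symm ▸ hL₁ f hf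
  let E₁ := firstOrderOpEnd V hdiff so3Field₁ (fun _ => α) h₁
  let E₂ := firstOrderOpEnd V hdiff so3Field₂ (fun p => 2 * α * p.2)
    fun f hf => (firstOrderOp_so3Field₂ α f).symm ▸ hL₂ f hf
  let E₃ := firstOrderOpEnd V hdiff so3Field₃ (fun p => -(2 * α * p.1))
    fun f hf => (firstOrderOp_so3Field₃ α f).symm ▸ hL₃ f hf
  have hD : ∀ f ∈ V, firstOrderOp so3Field₁ 0 f ∈ V := fun f hf => by
    simpa [firstOrderOp_const] using V.sub_mem (h₁ f hf) (V.smul_mem α hf)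
  let D := firstOrderOpEnd V hdiff so3Field₁ 0 hD
  have hE₁ : E₁ = D + α • 1 := by
    ext f : 2
    exact firstOrderOp_const so3Field₁ α f
  have hbracket : ⁅E₂, E₃⁆ = (-4 : ℝ) • E₁ := by
    ext f : 2
    exact firstOrderOp_so3Field₂_sub_so3Field₃ α (hC2 f f.2)
  have htrace₁ : LinearMap.trace ℝ V E₁ = 0 := by
    simpa using congrArg (LinearMap.trace ℝ V) hbracket
  have htraceD : LinearMap.trace ℝ V D = 0 :=
    trace_eq_zero_of_coe_apply_eq_fderiv_so3Field₁ (fun f hf => (hC2 f hf).of_le one_le_two)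
      fun f => by funext q; simp [D, firstOrderOp]
  have hpos : 0 < Module.finrank ℝ V :=
    Module.finrank_pos_iff.2 (Submodule.nontrivial_iff_ne_bot.2 hne)
  rw [hE₁, map_add, htraceD, map_smul, LinearMap.trace_one, smul_eq_mul, zero_add] at htrace₁
  exact (mul_eq_zero.1 htrace₁).resolve_right (by positivity)
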